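/- Let a_{n,m} be complex numbers for 1 ≤ n,m ≤ N. Then for every ε > 0, the L^4 norm over [0,1]^2 of the exponential sum ∑_{n,m=1}^N a_{n,m} e(n²x + m²y) is bounded by C_ε N^ε (∑_{n,m} |a_{n,m}|²)^{1/2}, where e(z) = e^{2πiz}. -/

import Mathlib

open MeasureTheory Complex

noncomputable def e (z : ℝ) : ℂ := Complex.exp (2 * Real.pi * Complex.I * z)

/-!
Write `S(x, y) = ∑ a_{n,m} e(n² x + m² y)`. Then `‖S‖⁴ = ‖S²‖²`, and `S²` is a trigonometric
polynomial whose frequency `(n₁² + n₂², m₁² + m₂²)` is attained by at most `r(A) r(B)` quadruples,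
where `r(k)` counts the representations of `k` as a sum of two positive squares. Parseval, followed
by Cauchy–Schwarz on each frequency class, bounds the integral by the largest such multiplicity
times `(∑ ‖a_{n,m}‖²)²`.

That `r(k) ≪_ε k^ε` is the divisor bound in `ℤ[i]`: a representation `k = n² + m²` gives the
divisor `n + m i` of `k`, distinct representations give non-associated divisors, and `k` has
`∏ (e_π + 1) ≤ C_ε N(k)^ε` divisors up to associates, since only the finitely many primes `π`
with `N(π)^ε < 2` contribute more than `N(π)^(ε e_π)` to the product.
-/

open Finset UniqueFactorizationMonoid ComplexConjugate

theorem add_one_le_pow_of_two_le {t : ℝ} (ht : 2 ≤ t) (c : ℕ) : (c + 1 : ℝ) ≤ t ^ c :=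
  calc (c + 1 : ℝ) = 1 + c * 1 := by ring
    _ ≤ (1 + 1) ^ c := one_add_mul_le_pow (by norm_num) c
    _ ≤ t ^ c := pow_le_pow_left₀ (by norm_num) (by linarith) c

theorem add_one_le_mul_rpow_pow {ε : ℝ} (hε : 0 < ε) (c : ℕ) :
    (c + 1 : ℝ) ≤ (1 / (ε * Real.log 2) + 1) * ((2 : ℝ) ^ ε) ^ c := by
  have ht : 0 < ε * Real.log 2 := mul_pos hε (Real.log_pos one_lt_two)
  have hexp : ((2 : ℝ) ^ ε) ^ c = Real.exp (c * (ε * Real.log 2)) := by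
    rw [← Real.rpow_natCast, ← Real.rpow_mul zero_le_two, Real.rpow_def_of_pos two_pos]
    ring_nf
  have h1 := Real.add_one_le_exp (c * (ε * Real.log 2))
  have h2 : 1 ≤ Real.exp (c * (ε * Real.log 2)) := Real.one_le_exp (by positivity)
  have hc : (c : ℝ) ≤ Real.exp (c * (ε * Real.log 2)) / (ε * Real.log 2) := by
    rw [le_div_iff₀ ht]; linarith
  rw [hexp, add_mul, one_div_mul_eq_div, one_mul]
  linarith

section DivisorBound

variable {R : Type*} [CommMonoidWithZero R] [NormalizationMonoid R] [UniqueFactorizationMonoid R]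

theorem card_le_prod_count_normalizedFactors_add_one [DecidableEq R] {k : R} (hk : k ≠ 0)
    {D : Finset R} (hD : ∀ z ∈ D, z ∣ k) (hassoc : ∀ z ∈ D, ∀ w ∈ D, Associated z w → z = w) :
    #D ≤ ∏ p ∈ (normalizedFactors k).toFinset, ((normalizedFactors k).count p + 1) := by
  set s := normalizedFactors k
  have hle : ∀ z ∈ D, z ≠ 0 ∧ normalizedFactors z ≤ s := fun z hz =>
    have hz0 : z ≠ 0 := ne_zero_of_dvd_ne_zero hk (hD z hz)
    ⟨hz0, (dvd_iff_normalizedFactors_le_normalizedFactors hz0 hk).mp (hD z hz)⟩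
  calc #D ≤ #(s.toFinset.pi fun p => range (s.count p + 1)) := by
        refine card_le_card_of_injOn (fun z p _ => (normalizedFactors z).count p) ?_ ?_
        · intro z hz
          simp only [mem_coe, mem_pi, mem_range, Nat.lt_succ_iff]
          exact fun p _ => Multiset.count_le_of_le p (hle z hz).2
        · intro z hz w hw hzw
          have hfac : normalizedFactors z = normalizedFactors w := by
            ext p
            by_cases hp : p ∈ s.toFinset
            · exact congrFun (congrFun hzw p) hp
            · have hs : s.count p = 0 := Multiset.count_eq_zero.mpr (by simpa using hp)
              have hz' := Multiset.count_le_of_le p (hle z hz).2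
              have hw' := Multiset.count_le_of_le p (hle w hw).2
              omega
          refine hassoc z hz w hw ?_
          exact (prod_normalizedFactors (hle z hz).1).symm.trans
            (hfac ▸ prod_normalizedFactors (hle w hw).1)
    _ = ∏ p ∈ s.toFinset, (s.count p + 1) := by simp [card_pi]

theorem prod_map_normalizedFactors (Nm : R →* ℕ) {k : R} (hk : k ≠ 0) :
    ((normalizedFactors k).map Nm).prod = Nm k := by
  rw [← map_multiset_prod]
  exact associated_iff_eq.mp ((prod_normalizedFactors hk).map Nm)

theorem exists_card_le_mul_rpow_of_dvd (Nm : R →* ℕ) (hNm0 : ∀ x, Nm x = 0 → x = 0)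
    (hNm1 : ∀ x, Nm x = 1 → IsUnit x)
    (hfin : ∀ B : ℕ, {x : R | normalize x = x ∧ Nm x ≤ B}.Finite) {ε : ℝ} (hε : 0 < ε) :
    ∃ C > 0, ∀ k : R, k ≠ 0 → ∀ D : Finset R, (∀ z ∈ D, z ∣ k) →
      (∀ z ∈ D, ∀ w ∈ D, Associated z w → z = w) → (#D : ℝ) ≤ C * (Nm k : ℝ) ^ ε := by
  classical
  set K : ℝ := 1 / (ε * Real.log 2) + 1
  have hK : 1 ≤ K := le_add_of_nonneg_left (by have := Real.log_pos one_lt_two; positivity)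
  -- contains every normalized prime `p` with `Nm p ^ ε < 2`
  set P := (hfin ⌊(2 : ℝ) ^ ε⁻¹⌋₊).toFinset
  refine ⟨K ^ #P, by positivity, fun k hk D hD hassoc => ?_⟩
  set s := normalizedFactors k
  have hfactor : ∀ p ∈ s.toFinset,
      (s.count p + 1 : ℝ) ≤ (if p ∈ P then K else 1) * ((Nm p : ℝ) ^ ε) ^ s.count p := by
    intro p hp
    rw [Multiset.mem_toFinset] at hp
    have hprime := prime_of_normalized_factor p hp
    have hNm : (2 : ℝ) ≤ Nm p := by
      have h0 : Nm p ≠ 0 := fun h => hprime.ne_zero (hNm0 p h)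
      have h1 : Nm p ≠ 1 := fun h => hprime.not_isUnit (hNm1 p h)
      exact_mod_cast (by omega : 2 ≤ Nm p)
    split_ifs with hP
    · refine (add_one_le_mul_rpow_pow hε _).trans (mul_le_mul_of_nonneg_left ?_ (by positivity))
      gcongr
    · rw [one_mul]
      refine add_one_le_pow_of_two_le (not_lt.mp fun hlt => hP ?_) _
      rw [Set.Finite.mem_toFinset]
      refine ⟨normalize_normalized_factor p hp, Nat.le_floor ?_⟩
      exact ((Real.lt_rpow_inv_iff_of_pos (by positivity) zero_le_two hε).mpr hlt).le
  have hnorm : ∏ p ∈ s.toFinset, ((Nm p : ℝ) ^ ε) ^ s.count p = (Nm k : ℝ) ^ ε := by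
    rw [← prod_multiset_map_count, Real.multiset_prod_map_rpow _ _ fun _ _ => by positivity,
      ← prod_map_normalizedFactors Nm hk, Nat.cast_multiset_prod, Multiset.map_map]
    rfl
  calc (#D : ℝ) ≤ ∏ p ∈ s.toFinset, (s.count p + 1 : ℝ) := by
        exact_mod_cast card_le_prod_count_normalizedFactors_add_one hk hD hassoc
    _ ≤ ∏ p ∈ s.toFinset, (if p ∈ P then K else 1) * ((Nm p : ℝ) ^ ε) ^ s.count p :=
        prod_le_prod (fun _ _ => by positivity) hfactor
    _ ≤ K ^ #P * (Nm k : ℝ) ^ ε := by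
        rw [prod_mul_distrib, prod_ite_mem, prod_const, hnorm]
        gcongr
        exact inter_subset_right

end DivisorBound

theorem GaussianInt.eq_of_associated {z w : GaussianInt} (hz : 0 < z.re ∧ 0 < z.im)
    (hw : 0 < w.re ∧ 0 < w.im) (h : Associated z w) : z = w := by
  obtain ⟨u, rfl⟩ := h
  have hnorm := (Zsqrtd.norm_eq_one_iff' (by norm_num) _).mpr u.isUnit
  simp only [Zsqrtd.re_mul, Zsqrtd.im_mul] at hw
  generalize (u : GaussianInt) = v at *
  obtain ⟨a, b⟩ := v
  simp only [Zsqrtd.norm_def] at hnorm hw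
  replace hnorm : a * a + b * b = 1 := by linarith
  obtain ⟨ha1, ha2, hb1, hb2⟩ : -1 ≤ a ∧ a ≤ 1 ∧ -1 ≤ b ∧ b ≤ 1 := by
    refine ⟨?_, ?_, ?_, ?_⟩ <;> nlinarith
  -- of the units `±1, ±i`, all but `1` move the open first quadrant off itself
  interval_cases a <;> interval_cases b <;> first | omega | (ext <;> simp)

theorem GaussianInt.finite_setOf_norm_le (B : ℕ) :
    {z : GaussianInt | z.norm.natAbs ≤ B}.Finite := by
  refine ((Set.finite_Icc (-B : ℤ) B).prod (Set.finite_Icc (-B : ℤ) B)).preimage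
    (f := fun z : GaussianInt => (z.re, z.im)) (fun z _ w _ h => ?_) |>.subset fun z hz => ?_
  · simp only [Prod.mk.injEq] at h
    exact Zsqrtd.ext h.1 h.2
  · have hB : z.re * z.re + z.im * z.im ≤ B := by
      have hnorm : z.norm = z.re * z.re + z.im * z.im := by rw [Zsqrtd.norm_def]; ring
      have := Int.le_natAbs (a := z.norm)
      have hz' : (z.norm.natAbs : ℤ) ≤ B := by exact_mod_cast hz
      linarith
    simp only [Set.mem_preimage, Set.mem_prod, Set.mem_Icc]
    refine ⟨⟨?_, ?_⟩, ?_, ?_⟩ <;> nlinarith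

def sqSumReps (k : ℕ) : Finset (ℕ × ℕ) :=
  (Icc 1 k ×ˢ Icc 1 k).filter fun q => q.1 ^ 2 + q.2 ^ 2 = k

theorem mem_sqSumReps {k n m : ℕ} : (n, m) ∈ sqSumReps k ↔ 0 < n ∧ 0 < m ∧ n ^ 2 + m ^ 2 = k := by
  simp only [sqSumReps, mem_filter, mem_product, mem_Icc]
  constructor
  · rintro ⟨⟨⟨hn, -⟩, hm, -⟩, h⟩
    exact ⟨hn, hm, h⟩
  · rintro ⟨hn, hm, rfl⟩
    have := Nat.le_self_pow two_ne_zero n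
    have := Nat.le_self_pow two_ne_zero m
    omega

theorem exists_card_sqSumReps_le {ε : ℝ} (hε : 0 < ε) :
    ∃ C > 0, ∀ k : ℕ, (#(sqSumReps k) : ℝ) ≤ C * (k : ℝ) ^ ε := by
  let _ := UniqueFactorizationMonoid.strongNormalizationMonoid (α := GaussianInt)
  let Nm : GaussianInt →* ℕ := (Int.natAbsHom : ℤ →* ℕ).comp Zsqrtd.normMonoidHom
  obtain ⟨C, hC, hdvd⟩ := exists_card_le_mul_rpow_of_dvd Nm
    (fun z hz => GaussianInt.norm_eq_zero.mp (Int.natAbs_eq_zero.mp hz))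
    (fun z hz => Zsqrtd.norm_eq_one_iff.mp hz)
    (fun B => (GaussianInt.finite_setOf_norm_le B).subset fun z hz => hz.2) (half_pos hε)
  refine ⟨C, hC, fun k => ?_⟩
  rcases Nat.eq_zero_or_pos k with rfl | hk
  · simp [sqSumReps, Real.zero_rpow hε.ne']
  let toGaussianInt : ℕ × ℕ → GaussianInt := fun q => ⟨q.1, q.2⟩
  have hinj : Function.Injective toGaussianInt := fun q q' h => by
    simpa [toGaussianInt, Prod.ext_iff] using h
  have hNm : Nm k = k ^ 2 := by
    simp [Nm, Zsqrtd.normMonoidHom, Zsqrtd.norm_natCast, Int.natAbs_mul, sq]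
  calc (#(sqSumReps k) : ℝ) = #((sqSumReps k).image toGaussianInt) := by
        rw [card_image_of_injective _ hinj]
    _ ≤ C * (Nm k : ℝ) ^ (ε / 2) := by
        refine hdvd k (by exact_mod_cast hk.ne') _ ?_ ?_
        · simp only [mem_image, Prod.exists]
          rintro _ ⟨n, m, hq, rfl⟩
          obtain ⟨-, -, hnm⟩ := mem_sqSumReps.mp hq
          exact ⟨⟨n, -m⟩, by ext <;> simp [toGaussianInt] <;> push_cast [← hnm] <;> ring⟩
        · simp only [mem_image, Prod.exists]
          rintro _ ⟨n, m, hq, rfl⟩ _ ⟨n', m', hq', rfl⟩ h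
          obtain ⟨hn, hm, -⟩ := mem_sqSumReps.mp hq
          obtain ⟨hn', hm', -⟩ := mem_sqSumReps.mp hq'
          exact GaussianInt.eq_of_associated (by simpa [toGaussianInt] using ⟨hn, hm⟩)
            (by simpa [toGaussianInt] using ⟨hn', hm'⟩) h
    _ = C * (k : ℝ) ^ ε := by
        rw [hNm, Nat.cast_pow, ← Real.rpow_natCast, ← Real.rpow_mul (by positivity)]
        ring_nf

theorem e_add (s t : ℝ) : e (s + t) = e s * e t := by
  rw [e, e, e, ← Complex.exp_add]
  push_cast
  ring_nf

theorem conj_e (s : ℝ) : conj (e s) = e (-s) := by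
  rw [e, e, ← Complex.exp_conj]
  simp only [map_mul, conj_I, conj_ofReal, map_ofNat]
  push_cast
  ring_nf

@[fun_prop]
theorem continuous_e : Continuous e := by
  unfold e
  fun_prop

theorem integral_e_int_mul (j : ℤ) : ∫ x in (0 : ℝ)..1, e (j * x) = if j = 0 then 1 else 0 := by
  split_ifs with hj
  · simp [hj, e]
  have hc : 2 * Real.pi * I * j ≠ 0 := by simp [Real.pi_ne_zero, I_ne_zero, hj]
  simp only [e, ofReal_mul, ofReal_intCast, ← mul_assoc]
  rw [integral_exp_mul_complex hc]
  simp only [ofReal_one, ofReal_zero, mul_one, mul_zero, Complex.exp_zero]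
  rw [show 2 * Real.pi * I * j = j * (2 * Real.pi * I) by ring, Complex.exp_int_mul_two_pi_mul_I,
    sub_self, zero_div]

noncomputable def e₂ (k : ℤ × ℤ) (x y : ℝ) : ℂ := e (k.1 * x + k.2 * y)

theorem e₂_add (k l : ℤ × ℤ) (x y : ℝ) : e₂ (k + l) x y = e₂ k x y * e₂ l x y := by
  rw [e₂, e₂, e₂, ← e_add, Prod.fst_add, Prod.snd_add]
  congr 1
  push_cast
  ring

theorem conj_e₂ (k : ℤ × ℤ) (x y : ℝ) : conj (e₂ k x y) = e₂ (-k) x y := by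
  rw [e₂, e₂, conj_e, Prod.fst_neg, Prod.snd_neg]
  congr 1
  push_cast
  ring

theorem continuous_e₂ (k : ℤ × ℤ) : Continuous fun p : ℝ × ℝ => e₂ k p.1 p.2 := by
  unfold e₂
  fun_prop

theorem integral_integral_e₂ (k : ℤ × ℤ) :
    ∫ x in (0 : ℝ)..1, ∫ y in (0 : ℝ)..1, e₂ k x y = if k = 0 then 1 else 0 := by
  calc ∫ x in (0 : ℝ)..1, ∫ y in (0 : ℝ)..1, e₂ k x y
      = ∫ x in (0 : ℝ)..1, e (k.1 * x) * if k.2 = 0 then 1 else 0 := by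
        simp only [e₂, e_add, intervalIntegral.integral_const_mul, integral_e_int_mul]
    _ = (if k.1 = 0 then 1 else 0) * if k.2 = 0 then 1 else 0 := by
        rw [intervalIntegral.integral_mul_const, integral_e_int_mul]
    _ = if k = 0 then 1 else 0 := by
        simp only [Prod.ext_iff, Prod.fst_zero, Prod.snd_zero]
        split_ifs <;> simp_all

theorem intervalIntegral.integral_integral_finsetSum {ι E : Type*} [NormedAddCommGroup E]
    [NormedSpace ℝ E] {a b c d : ℝ} (s : Finset ι) (f : ι → ℝ → ℝ → E)
    (hf : ∀ i ∈ s, Continuous fun p : ℝ × ℝ => f i p.1 p.2) :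
    ∫ x in a..b, ∫ y in c..d, ∑ i ∈ s, f i x y = ∑ i ∈ s, ∫ x in a..b, ∫ y in c..d, f i x y := by
  have hy : ∀ x, ∫ y in c..d, ∑ i ∈ s, f i x y = ∑ i ∈ s, ∫ y in c..d, f i x y := fun x =>
    intervalIntegral.integral_finsetSum fun i hi =>
      ((hf i hi).comp (Continuous.prodMk_right x)).intervalIntegrable _ _
  simp_rw [hy]
  exact intervalIntegral.integral_finsetSum fun i hi =>
    (intervalIntegral.continuous_parametric_intervalIntegral_of_continuous' (hf i hi) c d
      ).intervalIntegrable _ _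

theorem sum_mul_e₂_sq {V : Type*} [Fintype V] (c : V → ℂ) (F : V → ℤ × ℤ) (x y : ℝ) :
    (∑ v, c v * e₂ (F v) x y) ^ 2 = ∑ p : V × V, c p.1 * c p.2 * e₂ (F p.1 + F p.2) x y := by
  rw [sq, sum_mul_sum, ← univ_product_univ, sum_product]
  refine sum_congr rfl fun v _ => sum_congr rfl fun w _ => ?_
  rw [e₂_add]
  ring

theorem sum_norm_mul_sq {V : Type*} [Fintype V] (c : V → ℂ) :
    ∑ p : V × V, ‖c p.1 * c p.2‖ ^ 2 = (∑ v, ‖c v‖ ^ 2) ^ 2 := by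
  simp only [norm_mul, mul_pow]
  rw [sq (∑ v, _), sum_mul_sum, ← univ_product_univ, sum_product]

theorem integral_integral_norm_sum_e₂_sq (K : Finset (ℤ × ℤ)) (b : ℤ × ℤ → ℂ) :
    ∫ x in (0 : ℝ)..1, ∫ y in (0 : ℝ)..1, ‖∑ k ∈ K, b k * e₂ k x y‖ ^ 2 = ∑ k ∈ K, ‖b k‖ ^ 2 := by
  have hexpand : ∀ x y, ((‖∑ k ∈ K, b k * e₂ k x y‖ ^ 2 : ℝ) : ℂ)
      = ∑ p ∈ K ×ˢ K, b p.1 * conj (b p.2) * e₂ (p.1 - p.2) x y := by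
    intro x y
    rw [ofReal_pow, ← mul_conj', map_sum, sum_mul_sum, sum_product]
    refine sum_congr rfl fun k _ => sum_congr rfl fun l _ => ?_
    rw [map_mul, conj_e₂, sub_eq_add_neg, e₂_add]
    ring
  apply Complex.ofReal_injective
  simp_rw [← intervalIntegral.integral_ofReal, hexpand]
  refine (intervalIntegral.integral_integral_finsetSum (K ×ˢ K)
    (fun p x y => b p.1 * conj (b p.2) * e₂ (p.1 - p.2) x y)
    (fun p _ => continuous_const.mul (continuous_e₂ _))).trans ?_
  simp_rw [intervalIntegral.integral_const_mul, integral_integral_e₂, sub_eq_zero, sum_product,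
    mul_ite, mul_one, mul_zero, sum_ite_eq, ofReal_sum, ofReal_pow, mul_conj']
  exact sum_congr rfl fun k hk => if_pos hk

theorem integral_integral_norm_sum_e₂_sq_le {V : Type*} [Fintype V] (c : V → ℂ) (F : V → ℤ × ℤ)
    {M : ℝ} (hM : ∀ v, (#{w | F w = F v} : ℝ) ≤ M) :
    ∫ x in (0 : ℝ)..1, ∫ y in (0 : ℝ)..1, ‖∑ v, c v * e₂ (F v) x y‖ ^ 2 ≤ M * ∑ v, ‖c v‖ ^ 2 := by
  classical
  set K := univ.image F
  have hF : ∀ v ∈ (univ : Finset V), F v ∈ K := fun v _ => mem_image_of_mem F (mem_univ v)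
  have hgroup : ∀ x y, ∑ v, c v * e₂ (F v) x y = ∑ k ∈ K, (∑ v with F v = k, c v) * e₂ k x y := by
    intro x y
    rw [← sum_fiberwise_of_maps_to hF]
    refine sum_congr rfl fun k _ => ?_
    rw [sum_mul]
    exact sum_congr rfl fun v hv => by rw [(mem_filter.mp hv).2]
  simp_rw [hgroup, integral_integral_norm_sum_e₂_sq]
  calc ∑ k ∈ K, ‖∑ v with F v = k, c v‖ ^ 2
      ≤ ∑ k ∈ K, ∑ v with F v = k, M * ‖c v‖ ^ 2 := by
        refine sum_le_sum fun k _ => ?_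
        calc ‖∑ v with F v = k, c v‖ ^ 2 ≤ (∑ v with F v = k, ‖c v‖) ^ 2 := by
              gcongr; exact norm_sum_le _ _
          _ ≤ #{v | F v = k} * ∑ v with F v = k, ‖c v‖ ^ 2 := sq_sum_le_card_mul_sum_sq
          _ = ∑ v with F v = k, #{w | F w = F v} * ‖c v‖ ^ 2 := by
              rw [mul_sum]
              exact sum_congr rfl fun v hv => by rw [(mem_filter.mp hv).2]
          _ ≤ ∑ v with F v = k, M * ‖c v‖ ^ 2 := sum_le_sum fun v _ => by gcongr; exact hM v
    _ = M * ∑ v, ‖c v‖ ^ 2 := by rw [sum_fiberwise_of_maps_to hF, mul_sum]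

section SquareFrequencies

variable {N : ℕ}

def sqFreq (u : Fin N × Fin N) : ℤ × ℤ := ((u.1 + 1 : ℕ) ^ 2, (u.2 + 1 : ℕ) ^ 2)

theorem sum_mul_e_eq_sum_mul_e₂ (a : Fin N → Fin N → ℂ) (x y : ℝ) :
    ∑ n : Fin N, ∑ m : Fin N, a n m * e ((((n : ℕ) + 1) ^ 2 : ℝ) * x + (((m : ℕ) + 1) ^ 2 : ℝ) * y)
      = ∑ u : Fin N × Fin N, a u.1 u.2 * e₂ (sqFreq u) x y := by
  rw [← univ_product_univ, sum_product]
  simp [e₂, sqFreq]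

theorem card_fiber_sqFreq_add_le (v : (Fin N × Fin N) × (Fin N × Fin N)) :
    #{w : (Fin N × Fin N) × (Fin N × Fin N) | sqFreq w.1 + sqFreq w.2 = sqFreq v.1 + sqFreq v.2} ≤
      #(sqSumReps ((v.1.1 + 1 : ℕ) ^ 2 + (v.2.1 + 1 : ℕ) ^ 2)) *
        #(sqSumReps ((v.1.2 + 1 : ℕ) ^ 2 + (v.2.2 + 1 : ℕ) ^ 2)) := by
  rw [← card_product]
  refine card_le_card_of_injOn
    (fun w : (Fin N × Fin N) × (Fin N × Fin N) =>
      (((w.1.1 + 1 : ℕ), (w.2.1 + 1 : ℕ)), ((w.1.2 + 1 : ℕ), (w.2.2 + 1 : ℕ)))) ?_ ?_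
  · intro w hw
    simp only [coe_filter, mem_univ, true_and, Set.mem_ofPred_eq, sqFreq, Prod.ext_iff,
      Prod.fst_add, Prod.snd_add] at hw
    simp only [mem_coe, mem_product, mem_sqSumReps]
    refine ⟨⟨by omega, by omega, ?_⟩, by omega, by omega, ?_⟩
    · exact_mod_cast hw.1
    · exact_mod_cast hw.2
  · intro w _ w' _ h
    simp only [Prod.ext_iff, Nat.add_right_cancel_iff, Fin.val_inj] at h
    ext <;> simp [h]

theorem exists_card_fiber_sqFreq_add_le {ε : ℝ} (hε : 0 < ε) :
    ∃ C > 0, ∀ (N : ℕ) (v : (Fin N × Fin N) × (Fin N × Fin N)),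
      (#{w : (Fin N × Fin N) × (Fin N × Fin N) | sqFreq w.1 + sqFreq w.2 = sqFreq v.1 + sqFreq v.2}
        : ℝ) ≤ C * (N : ℝ) ^ (4 * ε) := by
  obtain ⟨C, hC, hrep⟩ := exists_card_sqSumReps_le hε
  refine ⟨(C * 2 ^ ε) ^ 2, by positivity, fun N v => ?_⟩
  have hrepN : ∀ n m : Fin N,
      (#(sqSumReps ((n + 1 : ℕ) ^ 2 + (m + 1 : ℕ) ^ 2)) : ℝ) ≤ C * 2 ^ ε * (N : ℝ) ^ (2 * ε) := by
    intro n m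
    have hle : (((n + 1 : ℕ) ^ 2 + (m + 1 : ℕ) ^ 2 : ℕ) : ℝ) ≤ 2 * (N : ℝ) ^ 2 := by
      have hn : (n + 1 : ℝ) ≤ N := by exact_mod_cast n.isLt
      have hm : (m + 1 : ℝ) ≤ N := by exact_mod_cast m.isLt
      push_cast
      nlinarith
    calc (#(sqSumReps ((n + 1 : ℕ) ^ 2 + (m + 1 : ℕ) ^ 2)) : ℝ)
        ≤ C * (2 * (N : ℝ) ^ 2) ^ ε := (hrep _).trans (by gcongr)
      _ = C * 2 ^ ε * (N : ℝ) ^ (2 * ε) := by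
        rw [Real.mul_rpow (by norm_num) (by positivity), ← Real.rpow_natCast,
          ← Real.rpow_mul (Nat.cast_nonneg N)]
        push_cast
        ring
  calc (_ : ℝ)
      ≤ #(sqSumReps ((v.1.1 + 1 : ℕ) ^ 2 + (v.2.1 + 1 : ℕ) ^ 2)) *
        #(sqSumReps ((v.1.2 + 1 : ℕ) ^ 2 + (v.2.2 + 1 : ℕ) ^ 2)) := by
        exact_mod_cast card_fiber_sqFreq_add_le v
    _ ≤ (C * 2 ^ ε * (N : ℝ) ^ (2 * ε)) * (C * 2 ^ ε * (N : ℝ) ^ (2 * ε)) := by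
        gcongr <;> apply hrepN
    _ = (C * 2 ^ ε) ^ 2 * (N : ℝ) ^ (4 * ε) := by
        rw [show 4 * ε = 2 * ε + 2 * ε by ring,
          Real.rpow_add_of_nonneg (by positivity) (by positivity) (by positivity)]
        ring

end SquareFrequencies

theorem stmt0 :
    ∀ ε > (0:ℝ), ∃ C > (0:ℝ), ∀ (N : ℕ) (a : Fin N → Fin N → ℂ),
      ∫ x in (0:ℝ)..1, ∫ y in (0:ℝ)..1,
          ‖∑ n : Fin N, ∑ m : Fin N,
              a n m * e ((((n:ℕ)+1)^2 : ℝ) * x + (((m:ℕ)+1)^2 : ℝ) * y)‖ ^ (4:ℕ)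
        ≤ C * (N:ℝ) ^ (4*ε) * (∑ n : Fin N, ∑ m : Fin N, ‖a n m‖ ^ 2) ^ 2 := by
  intro ε hε
  obtain ⟨C, hC, hfiber⟩ := exists_card_fiber_sqFreq_add_le hε
  refine ⟨C, hC, fun N a => ?_⟩
  set c : Fin N × Fin N → ℂ := fun u => a u.1 u.2
  have hfourth : ∀ x y : ℝ,
      ‖∑ n : Fin N, ∑ m : Fin N,
          a n m * e ((((n:ℕ)+1)^2 : ℝ) * x + (((m:ℕ)+1)^2 : ℝ) * y)‖ ^ (4:ℕ)
        = ‖∑ p : (Fin N × Fin N) × (Fin N × Fin N),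
            c p.1 * c p.2 * e₂ (sqFreq p.1 + sqFreq p.2) x y‖ ^ 2 := by
    intro x y
    rw [sum_mul_e_eq_sum_mul_e₂, ← sum_mul_e₂_sq, norm_pow, ← pow_mul]
  simp_rw [hfourth]
  calc _ ≤ C * (N:ℝ) ^ (4*ε) * ∑ p : (Fin N × Fin N) × (Fin N × Fin N), ‖c p.1 * c p.2‖ ^ 2 :=
        integral_integral_norm_sum_e₂_sq_le _ _ (hfiber N)
    _ = C * (N:ℝ) ^ (4*ε) * (∑ n : Fin N, ∑ m : Fin N, ‖a n m‖ ^ 2) ^ 2 := by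
        rw [sum_norm_mul_sq, ← univ_product_univ, sum_product]
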